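/- Let f, p, q, r : ℝ² → ℝ be smooth functions of (x,t) with p nowhere zero, satisfying the inhomogeneous nonlinear Schrödinger system q_t = (fq)_{xx} + 2qr, p_t = -(fp)_{xx} - 2pr, r_x = f(pq)_x + 2f_x pq. Let A₀ = [[0, q],[-p, 0]], B₀ = [[r, (fq)_x],[(fp)_x, -r]], and define A₁ = [[0, -p_x/p²],[0, 0]] and B₁ = [[(fp)_x/p, (fp)_{xx}/p² + 2fq],[-2fp, -(fp)_x/p]]. Then (A₁, B₁) is a cocycle with respect to the zero-curvature representation (A₀, B₀): ∂_t A₁ - ∂_x B₁ + (A₁·B₀ - B₀·A₁) + (A₀·B₁ - B₁·A₀) = 0 at every point. (This holds for every smooth f, without any constraint on f.) -/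

import Mathlib

/-- Partial derivative with respect to the first coordinate `x`. -/
noncomputable def px (f : ℝ × ℝ → ℝ) : ℝ × ℝ → ℝ :=
  fun z => fderiv ℝ f z (1, 0)

/-- Partial derivative with respect to the second coordinate `t`. -/
noncomputable def pt (f : ℝ × ℝ → ℝ) : ℝ × ℝ → ℝ :=
  fun z => fderiv ℝ f z (0, 1)

/-- Entrywise partial `x`-derivative of a matrix-valued function. -/
noncomputable def Mpx (A : ℝ × ℝ → Matrix (Fin 2) (Fin 2) ℝ) :
    ℝ × ℝ → Matrix (Fin 2) (Fin 2) ℝ :=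
  fun z => Matrix.of fun i j => px (fun w => A w i j) z

/-- Entrywise partial `t`-derivative of a matrix-valued function. -/
noncomputable def Mpt (A : ℝ × ℝ → Matrix (Fin 2) (Fin 2) ℝ) :
    ℝ × ℝ → Matrix (Fin 2) (Fin 2) ℝ :=
  fun z => Matrix.of fun i j => pt (fun w => A w i j) z

section helpers

variable {u v : ℝ × ℝ → ℝ} {z a : ℝ × ℝ}

private lemma dAt (h : ContDiff ℝ (⊤ : ℕ∞) u) (w : ℝ × ℝ) : DifferentiableAt ℝ u w :=
  h.differentiable (by simp) w

private lemma fd_add (hu : DifferentiableAt ℝ u z) (hv : DifferentiableAt ℝ v z) :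
    fderiv ℝ (fun w => u w + v w) z a = fderiv ℝ u z a + fderiv ℝ v z a := by
  rw [fderiv_fun_add hu hv]; simp

private lemma fd_mul (hu : DifferentiableAt ℝ u z) (hv : DifferentiableAt ℝ v z) :
    fderiv ℝ (fun w => u w * v w) z a = fderiv ℝ u z a * v z + u z * fderiv ℝ v z a := by
  rw [fderiv_fun_mul hu hv]; simp; ring

private lemma fd_neg : fderiv ℝ (fun w => -(u w)) z a = -(fderiv ℝ u z a) := by
  rw [fderiv_fun_neg]; simp

private lemma fd_const_mul (hu : DifferentiableAt ℝ u z) (c : ℝ) :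
    fderiv ℝ (fun w => c * u w) z a = c * fderiv ℝ u z a := by
  rw [fderiv_const_mul hu]; simp

private lemma fd_inv (hu : DifferentiableAt ℝ u z) (h0 : u z ≠ 0) :
    fderiv ℝ (fun w => (u w)⁻¹) z a = -(fderiv ℝ u z a) / (u z)^2 := by
  have h := (hasDerivAt_inv h0).comp_hasFDerivAt z hu.hasFDerivAt
  have h2 : fderiv ℝ (fun w => (u w)⁻¹) z = -(u z ^ 2)⁻¹ • fderiv ℝ u z := h.fderiv
  rw [h2]; simp; ring

private lemma fd_div (hu : DifferentiableAt ℝ u z) (hv : DifferentiableAt ℝ v z) (h0 : v z ≠ 0) :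
    fderiv ℝ (fun w => u w / v w) z a
      = (fderiv ℝ u z a * v z - u z * fderiv ℝ v z a) / (v z)^2 := by
  have h : (fun w => u w / v w) = fun w => u w * (v w)⁻¹ := by
    funext w; rw [div_eq_mul_inv]
  rw [h, fd_mul (v := fun w => (v w)⁻¹) hu (hv.inv h0), fd_inv hv h0]
  field_simp; ring

private lemma contDiff_px (hf : ContDiff ℝ (⊤ : ℕ∞) u) : ContDiff ℝ (⊤ : ℕ∞) (px u) :=
  (hf.fderiv_right (by simp)).clm_apply contDiff_const

private lemma fd_swap (hf : ContDiff ℝ (⊤ : ℕ∞) u) (z a b : ℝ × ℝ) :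
    fderiv ℝ (fun w => fderiv ℝ u w a) z b = fderiv ℝ (fun w => fderiv ℝ u w b) z a := by
  have hd : DifferentiableAt ℝ (fderiv ℝ u) z :=
    ((hf.fderiv_right (m := (⊤ : ℕ∞)) (by simp)).differentiable (by simp)) z
  have h1 : ∀ c : ℝ × ℝ, fderiv ℝ (fun w => fderiv ℝ u w c) z
      = (fderiv ℝ (fderiv ℝ u) z).flip c := by
    intro c
    have := fderiv_clm_apply (c := fderiv ℝ u) (u := fun _ => c) hd (differentiableAt_const c)
    simpa using this
  have hsymm := ((hf.contDiffAt (x := z)).of_le (m := 2)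
    (WithTop.coe_le_coe.mpr (le_top : (2:ℕ∞) ≤ ⊤))).isSymmSndFDerivAt (by simp)
  rw [h1 a, h1 b]
  exact hsymm b a

private lemma px_add (hu : DifferentiableAt ℝ u z) (hv : DifferentiableAt ℝ v z) :
    px (fun w => u w + v w) z = px u z + px v z := fd_add hu hv

private lemma px_mul (hu : DifferentiableAt ℝ u z) (hv : DifferentiableAt ℝ v z) :
    px (fun w => u w * v w) z = px u z * v z + u z * px v z := fd_mul hu hv

private lemma px_neg : px (fun w => -(u w)) z = -(px u z) := fd_neg

private lemma px_const_mul (hu : DifferentiableAt ℝ u z) (c : ℝ) :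
    px (fun w => c * u w) z = c * px u z := fd_const_mul hu c

private lemma px_div (hu : DifferentiableAt ℝ u z) (hv : DifferentiableAt ℝ v z) (h0 : v z ≠ 0) :
    px (fun w => u w / v w) z = (px u z * v z - u z * px v z) / (v z)^2 := fd_div hu hv h0

private lemma pt_neg : pt (fun w => -(u w)) z = -(pt u z) := fd_neg

private lemma pt_div (hu : DifferentiableAt ℝ u z) (hv : DifferentiableAt ℝ v z) (h0 : v z ≠ 0) :
    pt (fun w => u w / v w) z = (pt u z * v z - u z * pt v z) / (v z)^2 := fd_div hu hv h0

private lemma pt_mul (hu : DifferentiableAt ℝ u z) (hv : DifferentiableAt ℝ v z) :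
    pt (fun w => u w * v w) z = pt u z * v z + u z * pt v z := fd_mul hu hv

private lemma pt_px_comm (hf : ContDiff ℝ (⊤ : ℕ∞) u) : pt (px u) z = px (pt u) z :=
  fd_swap hf z (1, 0) (0, 1)

private lemma pt_zero : pt (fun _ : ℝ × ℝ => (0:ℝ)) z = 0 := by
  simp [pt]

end helpers

/-- For every smooth `f` and every solution `(p, q, r)` (with `p` nowhere zero) of the
inhomogeneous nonlinear Schrödinger system, the pair `(A₁, B₁)` below is a cocycle
with respect to the zero-curvature representation `(A₀, B₀)`. -/
theorem nhnls_cocycle (f p q r : ℝ × ℝ → ℝ)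
    (hf : ContDiff ℝ (⊤ : ℕ∞) f) (hp : ContDiff ℝ (⊤ : ℕ∞) p) (hq : ContDiff ℝ (⊤ : ℕ∞) q) (hr : ContDiff ℝ (⊤ : ℕ∞) r)
    (hp0 : ∀ z, p z ≠ 0)
    (heq1 : ∀ z, pt q z = px (px (fun w => f w * q w)) z + 2 * q z * r z)
    (heq2 : ∀ z, pt p z = -(px (px (fun w => f w * p w)) z) - 2 * p z * r z)
    (heq3 : ∀ z, px r z = f z * px (fun w => p w * q w) z + 2 * px f z * (p z * q z))
    (A₀ B₀ A₁ B₁ : ℝ × ℝ → Matrix (Fin 2) (Fin 2) ℝ)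
    (hA₀ : A₀ = fun z => !![0, q z; -p z, 0])
    (hB₀ : B₀ = fun z => !![r z, px (fun w => f w * q w) z;
                            px (fun w => f w * p w) z, -r z])
    (hA₁ : A₁ = fun z => !![0, -(px p z) / (p z) ^ 2; 0, 0])
    (hB₁ : B₁ = fun z => !![px (fun w => f w * p w) z / p z,
                            px (px (fun w => f w * p w)) z / (p z) ^ 2 + 2 * f z * q z;
                            -2 * f z * p z,
                            -(px (fun w => f w * p w) z) / p z]) :
    ∀ z, Mpt A₁ z - Mpx B₁ z + (A₁ z * B₀ z - B₀ z * A₁ z)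
        + (A₀ z * B₁ z - B₁ z * A₀ z) = 0 := by
  subst hA₀ hB₀ hA₁ hB₁
  intro z
  -- smoothness of the building blocks
  have hG : ContDiff ℝ (⊤ : ℕ∞) (fun w => f w * p w) := hf.mul hp
  have hG1 : ContDiff ℝ (⊤ : ℕ∞) (px (fun w => f w * p w)) := contDiff_px hG
  have hG2 : ContDiff ℝ (⊤ : ℕ∞) (px (px (fun w => f w * p w))) := contDiff_px hG1
  have hPx : ContDiff ℝ (⊤ : ℕ∞) (px p) := contDiff_px hp
  have hP0 : p z ≠ 0 := hp0 z
  have hPP0 : p z * p z ≠ 0 := mul_ne_zero hP0 hP0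
  -- first derivatives of the products
  have eG1 : px (fun w => f w * p w) z = px f z * p z + f z * px p z :=
    px_mul (dAt hf z) (dAt hp z)
  have eH1 : px (fun w => f w * q w) z = px f z * q z + f z * px q z :=
    px_mul (dAt hf z) (dAt hq z)
  have ePQ : px (fun w => p w * q w) z = px p z * q z + p z * px q z :=
    px_mul (dAt hp z) (dAt hq z)
  -- the t-derivative of p, as a function, via the PDE
  have hptp : pt p = fun w => -(px (px (fun w' => f w' * p w')) w) + (-2) * (p w * r w) := by
    funext w; rw [heq2 w]; ring
  have e_ptpx : px (pt p) z
      = -(px (px (px (fun w => f w * p w))) z)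
        + (-2) * (px p z * r z + p z * px r z) := by
    rw [hptp,
      px_add (u := fun w => -(px (px (fun w' => f w' * p w')) w)) (v := fun w => (-2) * (p w * r w)) (dAt hG2 z).neg (((dAt hp z).mul (dAt hr z)).const_mul (-2)),
      px_neg, px_const_mul (u := fun w => p w * r w) ((dAt hp z).mul (dAt hr z)),
      px_mul (dAt hp z) (dAt hr z)]
  have e_swap : pt (px p) z = px (pt p) z := pt_px_comm hp
  ext i j
  fin_cases i <;> fin_cases j <;>
    simp only [Mpt, Mpx, Matrix.mul_apply, Fin.sum_univ_two, Matrix.sub_apply,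
      Matrix.add_apply, Matrix.of_apply, Matrix.cons_val', Matrix.cons_val_zero,
      Matrix.cons_val_one, Matrix.head_cons, Matrix.head_fin_const, Matrix.empty_val',
      Matrix.cons_val_fin_one, Fin.isValue, Fin.zero_eta, Fin.mk_one, Matrix.zero_apply]
  · -- entry (0,0)
    rw [pt_zero, px_div (dAt hG1 z) (dAt hp z) hP0]
    field_simp
    ring
  · -- entry (0,1)
    have ha : pt (fun w => -px p w / p w ^ 2) z
        = -((pt (px p) z * (p z * p z) - px p z * (pt p z * p z + p z * pt p z))
            / (p z * p z)^2) := by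
      have h : (fun w => -px p w / p w ^ 2) = fun w => -(px p w / (p w * p w)) := by
        funext w; rw [sq]; ring
      rw [h, pt_neg, pt_div (v := fun w => p w * p w) (dAt hPx z) ((dAt hp z).mul (dAt hp z)) hPP0,
        pt_mul (dAt hp z) (dAt hp z)]
    have hc : px (fun w => px (px fun w => f w * p w) w / p w ^ 2 + 2 * f w * q w) z
        = (px (px (px (fun w => f w * p w))) z * (p z * p z)
            - px (px (fun w => f w * p w)) z * (px p z * p z + p z * px p z))
            / (p z * p z)^2
          + 2 * px (fun w => f w * q w) z := by
      have h : (fun w => px (px fun w => f w * p w) w / p w ^ 2 + 2 * f w * q w)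
          = fun w => px (px fun w => f w * p w) w / (p w * p w) + 2 * (f w * q w) := by
        funext w; rw [sq]; ring
      have d1 : DifferentiableAt ℝ
          (fun w => px (px fun w => f w * p w) w / (p w * p w)) z := by
        simp only [div_eq_mul_inv]
        exact (dAt hG2 z).mul (((dAt hp z).mul (dAt hp z)).inv hPP0)
      rw [h, px_add (v := fun w => 2 * (f w * q w)) d1 (((dAt hf z).mul (dAt hq z)).const_mul 2),
        px_div (v := fun w => p w * p w) (dAt hG2 z) ((dAt hp z).mul (dAt hp z)) hPP0,
        px_mul (dAt hp z) (dAt hp z),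
        px_const_mul (u := fun w => f w * q w) ((dAt hf z).mul (dAt hq z))]
    rw [ha, hc, e_swap, e_ptpx, heq2 z, heq3 z, ePQ, eG1, eH1]
    field_simp
    ring
  · -- entry (1,0)
    rw [pt_zero]
    have h : (fun w => -2 * f w * p w) = fun w => (-2) * (f w * p w) := by
      funext w; ring
    rw [h, px_const_mul (dAt hG z)]
    field_simp
    ring
  · -- entry (1,1)
    rw [pt_zero]
    have h : (fun w => -px (fun w => f w * p w) w / p w)
        = fun w => -(px (fun w => f w * p w) w / p w) := by
      funext w; rw [neg_div]
    rw [h, px_neg, px_div (dAt hG1 z) (dAt hp z) hP0]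
    field_simp
    ring
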